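/- Let G = (V, E) be a graph with V = {v_1, …, v_p}, and let A = (Q, Σ, δ) be the automaton with Q = {s_1, …, s_p, t_1, …, t_p, f}, alphabet Σ = {ṽ_1, …, ṽ_p}, and transitions: δ(s_i, ṽ_i) = f; δ(s_i, ṽ_j) = t_i whenever v_i v_j ∈ E; and all other transitions are self-loops. If I ⊆ V is an independent set in G, then {s_i : v_i ∈ I} ∪ {f} is a synchronizing set in A of size |I| + 1. -/
import Mathlib


def deltaStar {Q A : Type*} (δ : Q → A → Q) (q : Q) (w : List A) : Q :=
  w.foldl δ q

def IsSyncSet {Q A : Type*} (δ : Q → A → Q) (S : Set Q) : Prop :=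
  ∃ (w : List A) (q : Q), ∀ s ∈ S, deltaStar δ s w = q

/-- States of the automaton built from a graph on p vertices:
states s_i, t_i (i < p) and a sink-target state f. -/
inductive St (p : ℕ) : Type where
  | s : Fin p → St p
  | t : Fin p → St p
  | f : St p
deriving DecidableEq

/-- Transitions: letter j sends s_j to f, sends s_i to t_i when v_i v_j ∈ E,
and all other transitions are self-loops. -/
def gDelta {p : ℕ} (G : SimpleGraph (Fin p)) [DecidableRel G.Adj] :
    St p → Fin p → St p
  | St.s i, j => if i = j then St.f else if G.Adj i j then St.t i else St.s i
  | St.t i, _ => St.t i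
  | St.f, _ => St.f


lemma f_fixed {p : ℕ} (G : SimpleGraph (Fin p)) [DecidableRel G.Adj]
    (w : List (Fin p)) : deltaStar (gDelta G) St.f w = St.f := by
  induction w with
  | nil => rfl
  | cons a w ih => simpa [deltaStar, gDelta] using ih

lemma s_to_f {p : ℕ} (G : SimpleGraph (Fin p)) [DecidableRel G.Adj]
    (I : Finset (Fin p))
    (hI : (I : Set (Fin p)).Pairwise (fun a b => ¬ G.Adj a b))
    (i : Fin p) (hi : i ∈ I) (w : List (Fin p))
    (hw : ∀ j ∈ w, j ∈ I) (hmem : i ∈ w) :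
    deltaStar (gDelta G) (St.s i) w = St.f := by
  induction w with
  | nil => simp at hmem
  | cons a w ih =>
    by_cases h : i = a
    · subst h
      simp only [deltaStar, List.foldl, gDelta, if_pos rfl]
      exact f_fixed G w
    · have ha : a ∈ I := hw a (by simp)
      have hadj : ¬ G.Adj i a := hI hi ha h
      simp only [deltaStar, List.foldl, gDelta, if_neg h, if_neg hadj]
      have hmem' : i ∈ w := by
        rcases List.mem_cons.mp hmem with h'|h'
        · exact absurd h' h
        · exact h'
      exact ih (fun j hj => hw j (List.mem_cons_of_mem _ hj)) hmem'

/-- For an independent set I of G, the set {s_i : v_i ∈ I} ∪ {f} is a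
synchronizing set of size |I| + 1 in the automaton built from G. -/
theorem stmt_7 {p : ℕ} (G : SimpleGraph (Fin p)) [DecidableRel G.Adj]
    (I : Finset (Fin p))
    (hI : (I : Set (Fin p)).Pairwise (fun a b => ¬ G.Adj a b)) :
    IsSyncSet (gDelta G) (↑(insert St.f (I.image St.s)) : Set (St p)) ∧
      (insert St.f (I.image St.s)).card = I.card + 1 := by
  constructor
  · refine ⟨I.toList, St.f, ?_⟩
    intro x hx
    simp only [Finset.coe_insert, Set.mem_insert_iff, Finset.coe_image,
      Set.mem_image, Finset.mem_coe] at hx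
    rcases hx with rfl | ⟨i, hi, rfl⟩
    · exact f_fixed G _
    · exact s_to_f G I hI i hi _ (fun j hj => Finset.mem_toList.mp hj)
        (Finset.mem_toList.mpr hi)
  · rw [Finset.card_insert_of_notMem (by simp), Finset.card_image_of_injective _
      (fun a b h => by injection h)]
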